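/- arXiv:2205.11897 — 8 statements merged into one kernel-verified Lean document; each statement's English description precedes it below -/
import Mathlib

section
/- Let G and H be locally compact, second countable (lcsc) topological groups and let Γ ⊆ G × H be a uniform lattice such that π_H(Γ) is dense in H. Then for every nonempty open subset U ⊆ H there exists a compact set K ⊆ G such that (K × U)·Γ = G × H. -/
/-!
Since `π_H(Γ)` is dense, `U * π_H(Γ) = H`, so the open set `G × U` satisfies
`(G × U) Γ = G × H`. Finitely many translates `(G × U) γ`, `γ ∈ F ⊆ Γ`, cover the compact
set `C`, hence `C ⊆ (C F⁻¹ ∩ (G × U)) F`, and `K = π_G(C F⁻¹)` is compact with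
`G × H = C Γ ⊆ (K × U) Γ`.
-/

open Pointwise Set

theorem Dense.isOpen_mul_eq_univ {H : Type*} [Group H] [TopologicalSpace H] [IsTopologicalGroup H]
    {S U : Set H} (hS : Dense S) (hU : IsOpen U) (hUne : U.Nonempty) : U * S = univ := by
  refine eq_univ_of_forall fun h => ?_
  obtain ⟨u, hu⟩ := hUne
  obtain ⟨s, hsS, v, hv, w, hw, rfl⟩ := hS.exists_mem_open (hU.inv.mul_right (t := {h}))
    ⟨u⁻¹ * h, mul_mem_mul (inv_mem_inv.mpr hu) rfl⟩
  rw [mem_singleton_iff.mp hw] at hsS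
  exact ⟨v⁻¹, mem_inv.mp hv, v * h, hsS, by group⟩

theorem univ_prod_mul_eq_univ {G H : Type*} [Group G] [Group H] {U : Set H} {S : Set (G × H)}
    (hS : U * Prod.snd '' S = univ) : (univ ×ˢ U) * S = univ := by
  refine eq_univ_of_forall fun ⟨g, h⟩ => ?_
  obtain ⟨u, hu, _, ⟨s, hs, rfl⟩, hus⟩ := hS.ge (mem_univ h)
  exact ⟨(g * s.1⁻¹, u), ⟨mem_univ _, hu⟩, s, hs, Prod.ext (by simp) hus⟩

theorem subset_mul_inv_inter_mul {X : Type*} [Group X] {C V F : Set X} (h : C ⊆ V * F) :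
    C ⊆ (C * F⁻¹ ∩ V) * F := by
  rintro c hc
  obtain ⟨v, hv, f, hf, rfl⟩ := h hc
  exact ⟨v, ⟨⟨v * f, hc, f⁻¹, inv_mem_inv.mpr hf, by group⟩, hv⟩, f, hf, rfl⟩

section TopologicalGroup

variable {X : Type*} [Group X] [TopologicalSpace X] [IsTopologicalGroup X]

theorem IsCompact.exists_finite_subset_mul {C V S : Set X} (hC : IsCompact C) (hV : IsOpen V)
    (hVS : V * S = univ) : ∃ F ⊆ S, F.Finite ∧ C ⊆ V * F := by
  obtain ⟨F, hFS, hF, hCF⟩ := hC.elim_finite_subcover_image (b := S)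
    (fun s _ => isOpenMap_mul_right s V hV)
    (by rw [iUnion_mul_right_image, hVS]; exact subset_univ C)
  exact ⟨F, hFS, hF, iUnion_mul_right_image (s := V) ▸ hCF⟩

theorem Subgroup.exists_isCompact_inter_mul_eq_univ (Γ : Subgroup X) {C V : Set X}
    (hC : IsCompact C) (hCΓ : C * (Γ : Set X) = univ) (hV : IsOpen V)
    (hVΓ : V * (Γ : Set X) = univ) : ∃ K, IsCompact K ∧ (K ∩ V) * (Γ : Set X) = univ := by
  obtain ⟨F, hFΓ, hF, hCF⟩ := hC.exists_finite_subset_mul hV hVΓ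
  refine ⟨C * F⁻¹, hC.mul hF.inv.isCompact, eq_univ_of_univ_subset ?_⟩
  calc univ = C * (Γ : Set X) := hCΓ.symm
    _ ⊆ (C * F⁻¹ ∩ V) * F * Γ := mul_subset_mul_right (subset_mul_inv_inter_mul hCF)
    _ ⊆ (C * F⁻¹ ∩ V) * Γ := by
      rw [mul_assoc]
      exact mul_subset_mul_left ((mul_subset_mul_right hFΓ).trans (coe_mul_coe Γ).subset)

end TopologicalGroup

theorem exists_compact_factor_of_dense_proj_general
    {G H : Type*}
    [Group G] [TopologicalSpace G] [IsTopologicalGroup G]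
    [Group H] [TopologicalSpace H] [IsTopologicalGroup H]
    (Γ : Subgroup (G × H))
    (hcocompact : ∃ C : Set (G × H), IsCompact C ∧ C * (Γ : Set (G × H)) = Set.univ)
    (hdense : Dense (Prod.snd '' (Γ : Set (G × H))))
    (U : Set H) (hUopen : IsOpen U) (hUne : U.Nonempty) :
    ∃ K : Set G, IsCompact K ∧ (K ×ˢ U) * (Γ : Set (G × H)) = Set.univ := by
  obtain ⟨C, hC, hCΓ⟩ := hcocompact
  have hVΓ : (univ ×ˢ U) * (Γ : Set (G × H)) = univ :=
    univ_prod_mul_eq_univ (hdense.isOpen_mul_eq_univ hUopen hUne)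
  obtain ⟨K, hK, hKΓ⟩ :=
    Γ.exists_isCompact_inter_mul_eq_univ hC hCΓ (isOpen_univ.prod hUopen) hVΓ
  refine ⟨Prod.fst '' K, hK.image continuous_fst, eq_univ_of_univ_subset ?_⟩
  rw [← hKΓ]
  exact mul_subset_mul_right fun x hx => ⟨mem_image_of_mem _ hx.1, hx.2.2⟩

/-- Let `G` and `H` be locally compact, second countable topological groups
and let `Γ ⊆ G × H` be a uniform lattice (a discrete subgroup which is cocompact, i.e. there is a
compact `C` with `C·Γ = G × H`) such that `π_H(Γ)` is dense in `H`. Then for every nonempty open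
subset `U ⊆ H` there exists a compact set `K ⊆ G` with `(K × U)·Γ = G × H`. -/
theorem exists_compact_factor_of_dense_proj
    {G H : Type*}
    [Group G] [TopologicalSpace G] [IsTopologicalGroup G]
    [LocallyCompactSpace G] [SecondCountableTopology G]
    [Group H] [TopologicalSpace H] [IsTopologicalGroup H]
    [LocallyCompactSpace H] [SecondCountableTopology H]
    (Γ : Subgroup (G × H)) [DiscreteTopology Γ]
    (hcocompact : ∃ C : Set (G × H), IsCompact C ∧ C * (Γ : Set (G × H)) = Set.univ)
    (hdense : Dense (Prod.snd '' (Γ : Set (G × H))))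
    (U : Set H) (hUopen : IsOpen U) (hUne : U.Nonempty) :
    ∃ K : Set G, IsCompact K ∧ (K ×ˢ U) * (Γ : Set (G × H)) = Set.univ :=
  exists_compact_factor_of_dense_proj_general Γ hcocompact hdense U hUopen hUne
end

section
/- Let (G, H, Γ) be a cut-and-project scheme, where G carries a right-invariant, proper metric compatible with its topology, and let W ⊆ H be a subset with nonempty interior. Then the set Λ := π_G((G × W) ∩ Γ) is relatively dense in G: there exists R > 0 such that B_R(x) ∩ Λ ≠ ∅ for every x ∈ G. -/
/-!
Fix `w` in the interior `V` of `W`. Writing `(x, w) = c * γ` with `c ∈ C` and `γ ∈ Γ`, the second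
coordinate `γ.2 = c.2⁻¹ * w` ranges over a compact subset of `H`, which by density of `π_H(Γ)` is
covered by translates `δ.2 • V` with `δ` in a finite set `F ⊆ Γ`. Then `δ⁻¹ * γ ∈ Γ` has second
coordinate in `W` and first coordinate `(c.1 * δ.1)⁻¹ * x`, so `K * Λ = G` for the compact set
`K = π_G(C) * π_G(F)`. For a right-invariant metric this makes `Λ` relatively dense, since
`dist l (k * l) = dist 1 k`.
-/

open Set Metric Pointwise

theorem Bornology.IsBounded.exists_ball_inter_nonempty_of_mul_eq_univ {G : Type*} [Group G]
    [PseudoMetricSpace G] [IsIsometricSMul Gᵐᵒᵖ G] {K L : Set G} (hK : Bornology.IsBounded K)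
    (hKL : K * L = univ) : ∃ R : ℝ, 0 < R ∧ ∀ x : G, (ball x R ∩ L).Nonempty := by
  obtain ⟨R, hR, hKR⟩ := hK.subset_ball_lt 0 1
  refine ⟨R, hR, fun x => ?_⟩
  obtain ⟨k, hk, l, hl, rfl⟩ : x ∈ K * L := hKL ▸ mem_univ x
  refine ⟨l, ?_, hl⟩
  calc dist l (k * l) = dist (1 * l) (k * l) := by rw [one_mul]
    _ = dist 1 k := dist_mul_right 1 k l
    _ < R := by simpa [dist_comm] using hKR hk

theorem IsCompact.exists_finite_cover_smul_of_dense_image {X H : Type*} [Group H]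
    [TopologicalSpace H] [IsTopologicalGroup H] {K V : Set H} {S : Set X} {f : X → H}
    (hK : IsCompact K) (hV : IsOpen V) (hVne : V.Nonempty) (hS : Dense (f '' S)) :
    ∃ s ⊆ S, s.Finite ∧ K ⊆ ⋃ i ∈ s, f i • V := by
  refine hK.elim_finite_subcover_image (fun i _ => hV.smul (f i)) fun k _ => ?_
  obtain ⟨v, hv⟩ := hVne
  have hkV : IsOpen ((fun g => g⁻¹ * k) ⁻¹' V) := hV.preimage (by fun_prop)
  obtain ⟨_, ⟨i, hi, rfl⟩, hgV⟩ := hS.exists_mem_open hkV ⟨k * v⁻¹, by simpa using hv⟩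
  exact mem_biUnion hi ⟨_, hgV, by simp⟩

theorem exists_isCompact_mul_fst_image_eq_univ {G H : Type*}
    [Group G] [TopologicalSpace G] [ContinuousMul G]
    [Group H] [TopologicalSpace H] [IsTopologicalGroup H] (Γ : Subgroup (G × H))
    {C : Set (G × H)} (hC : IsCompact C) (hCΓ : C * (Γ : Set (G × H)) = univ)
    (hdense : Dense (Prod.snd '' (Γ : Set (G × H)))) {W : Set H} (hW : (interior W).Nonempty) :
    ∃ K : Set G, IsCompact K ∧ K * (Prod.fst '' ((univ ×ˢ W) ∩ (Γ : Set (G × H)))) = univ := by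
  obtain ⟨w, hw⟩ := hW
  obtain ⟨s, hsΓ, hs, hcover⟩ := (hC.image (f := fun c : G × H => c.2⁻¹ * w) (by fun_prop))
    |>.exists_finite_cover_smul_of_dense_image isOpen_interior ⟨w, hw⟩ hdense
  refine ⟨Prod.fst '' C * Prod.fst '' s, (hC.image continuous_fst).mul (hs.image _).isCompact,
    eq_univ_of_forall fun x => ?_⟩
  obtain ⟨c, hc, γ, hγ, hcγ⟩ : (x, w) ∈ C * (Γ : Set (G × H)) := hCΓ ▸ mem_univ _
  obtain ⟨hcγ₁, hcγ₂⟩ := Prod.ext_iff.1 hcγ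
  have hγ₂ : γ.2 = c.2⁻¹ * w := eq_inv_mul_of_mul_eq hcγ₂
  obtain ⟨δ, hδs, v, hv, hδv⟩ := mem_iUnion₂.1 (hcover ⟨c, hc, hγ₂.symm⟩)
  refine ⟨c.1 * δ.1, mul_mem_mul (mem_image_of_mem _ hc) (mem_image_of_mem _ hδs),
    (δ⁻¹ * γ).1, ⟨δ⁻¹ * γ, ⟨⟨trivial, ?_⟩, mul_mem (inv_mem (hsΓ hδs)) hγ⟩, rfl⟩, ?_⟩
  · have : (δ⁻¹ * γ).2 = v := by simp [← hδv]
    exact this ▸ interior_subset hv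
  · simpa [mul_assoc] using hcγ₁

theorem cut_and_project_relatively_dense_general
    {G H : Type*}
    [Group G] [MetricSpace G] [IsTopologicalGroup G]
    [Group H] [TopologicalSpace H] [IsTopologicalGroup H]
    (hinvG : ∀ x y g : G, dist (x * g) (y * g) = dist x y)
    (Γ : Subgroup (G × H))
    (hcocompact : ∃ C : Set (G × H), IsCompact C ∧ C * (Γ : Set (G × H)) = Set.univ)
    (hdense : Dense (Prod.snd '' (Γ : Set (G × H))))
    (W : Set H) (hW : (interior W).Nonempty) :
    ∃ R : ℝ, 0 < R ∧ ∀ x : G,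
      (Metric.ball x R ∩ (Prod.fst '' ((Set.univ ×ˢ W) ∩ (Γ : Set (G × H))))).Nonempty := by
  have : IsIsometricSMul Gᵐᵒᵖ G := ⟨fun g => Isometry.of_dist_eq fun x y => hinvG x y g.unop⟩
  obtain ⟨C, hC, hCΓ⟩ := hcocompact
  obtain ⟨K, hK, hKΛ⟩ := exists_isCompact_mul_fst_image_eq_univ Γ hC hCΓ hdense hW
  exact hK.isBounded.exists_ball_inter_nonempty_of_mul_eq_univ hKΛ

/-- Let `(G, H, Γ)` be a cut-and-project scheme (Γ a uniform lattice in `G × H`,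
`π_G|_Γ` injective, `π_H(Γ)` dense in `H`), where `G` carries a right-invariant, proper metric
compatible with its topology, and let `W ⊆ H` have nonempty interior.  Then the cut-and-project
set `Λ := π_G((G × W) ∩ Γ)` is relatively dense in `G`. -/
theorem cut_and_project_relatively_dense
    {G H : Type*}
    [Group G] [MetricSpace G] [IsTopologicalGroup G] [ProperSpace G] [SecondCountableTopology G]
    [Group H] [TopologicalSpace H] [IsTopologicalGroup H]
    [LocallyCompactSpace H] [SecondCountableTopology H]
    (hinvG : ∀ x y g : G, dist (x * g) (y * g) = dist x y)
    (Γ : Subgroup (G × H)) [DiscreteTopology Γ]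
    (hcocompact : ∃ C : Set (G × H), IsCompact C ∧ C * (Γ : Set (G × H)) = Set.univ)
    (hinj : Set.InjOn Prod.fst (Γ : Set (G × H)))
    (hdense : Dense (Prod.snd '' (Γ : Set (G × H))))
    (W : Set H) (hW : (interior W).Nonempty) :
    ∃ R : ℝ, 0 < R ∧ ∀ x : G,
      (Metric.ball x R ∩ (Prod.fst '' ((Set.univ ×ˢ W) ∩ (Γ : Set (G × H))))).Nonempty :=
  cut_and_project_relatively_dense_general hinvG Γ hcocompact hdense W hW
end

section
/- Let (G, H, Γ) be a cut-and-project scheme, where G and H each carry a right-invariant, proper metric compatible with the topology, and let W ⊆ H be relatively compact. Then the set Λ := π_G((G × W) ∩ Γ) is uniformly discrete in G: there exists r > 0 such that d(λ, μ) ≥ r for all distinct λ, μ ∈ Λ. -/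
/-!
The differences `l * m⁻¹` of points of `Λ` are `G`-coordinates of lattice points whose
`H`-coordinate lies in the compact set `closure W * (closure W)⁻¹`. Since `Γ` is discrete, only
finitely many such lattice points lie over the unit ball of `G`, so the nontrivial differences
stay a positive distance away from `1`; right invariance of the metric turns this into a uniform
lower bound on `dist l m`.
-/

open Pointwise Metric

theorem Subgroup.finite_inter_of_isCompact {G : Type*} [Group G] [TopologicalSpace G]
    [IsTopologicalGroup G] [T2Space G] (Γ : Subgroup G) [DiscreteTopology Γ] {C : Set G}
    (hC : IsCompact C) : ((Γ : Set G) ∩ C).Finite :=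
  (hC.inter_left Subgroup.isClosed_of_discrete).finite <|
    (isDiscrete_iff_discreteTopology.2 ‹_›).mono Set.inter_subset_left

theorem Subgroup.finite_image_fst_inter_closedBall {G H : Type*} [Group G] [MetricSpace G]
    [IsTopologicalGroup G] [ProperSpace G] [Group H] [TopologicalSpace H] [IsTopologicalGroup H]
    [T2Space H] (Γ : Subgroup (G × H)) [DiscreteTopology Γ] {K : Set H} (hK : IsCompact K)
    (x : G) (δ : ℝ) :
    (Prod.fst '' ((Γ : Set (G × H)) ∩ Set.univ ×ˢ K) ∩ closedBall x δ).Finite :=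
  ((Γ.finite_inter_of_isCompact ((isCompact_closedBall x δ).prod hK)).image Prod.fst).subset <| by
    rintro _ ⟨⟨p, ⟨hpΓ, -, hpK⟩, rfl⟩, hpx⟩
    exact ⟨p, ⟨hpΓ, hpx, hpK⟩, rfl⟩

theorem exists_pos_le_dist_of_finite_inter_closedBall {X : Type*} [MetricSpace X] {D : Set X}
    {x : X} {δ : ℝ} (hδ : 0 < δ) (hD : (D ∩ closedBall x δ).Finite) :
    ∃ r > 0, ∀ y ∈ D, y ≠ x → r ≤ dist y x := by
  have hnhds : ((D ∩ closedBall x δ) \ {x})ᶜ ∈ nhds x :=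
    hD.sdiff.isClosed.isOpen_compl.mem_nhds fun h => h.2 rfl
  obtain ⟨ε, hε, hball⟩ := Metric.mem_nhds_iff.1 hnhds
  refine ⟨min ε δ, lt_min hε hδ, fun y hy hyx => ?_⟩
  by_cases hyδ : dist y x ≤ δ
  · have hyε : y ∉ ball x ε := fun h => hball h ⟨⟨hy, hyδ⟩, hyx⟩
    exact (min_le_left _ _).trans (not_lt.1 hyε)
  · exact (min_le_right _ _).trans (le_of_not_ge hyδ)

theorem dist_mul_inv_one_of_right_invariant {G : Type*} [Group G] [MetricSpace G]
    (hinv : ∀ x y g : G, dist (x * g) (y * g) = dist x y) (a b : G) :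
    dist (a * b⁻¹) 1 = dist a b := by
  simpa using (hinv (a * b⁻¹) 1 b).symm

theorem cut_and_project_uniformly_discrete_general
    {G H : Type*}
    [Group G] [MetricSpace G] [IsTopologicalGroup G] [ProperSpace G]
    [Group H] [MetricSpace H] [IsTopologicalGroup H]
    (hinvG : ∀ x y g : G, dist (x * g) (y * g) = dist x y)
    (Γ : Subgroup (G × H)) [DiscreteTopology Γ]
    (W : Set H) (hWrc : IsCompact (closure W)) :
    ∃ r : ℝ, 0 < r ∧
      ∀ l ∈ Prod.fst '' ((Set.univ ×ˢ W) ∩ (Γ : Set (G × H))),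
      ∀ m ∈ Prod.fst '' ((Set.univ ×ˢ W) ∩ (Γ : Set (G × H))),
        l ≠ m → r ≤ dist l m := by
  obtain ⟨r, hr, hsep⟩ := exists_pos_le_dist_of_finite_inter_closedBall one_pos
    (Γ.finite_image_fst_inter_closedBall (hWrc.mul hWrc.inv) 1 1)
  refine ⟨r, hr, ?_⟩
  rintro _ ⟨p, ⟨⟨-, hpW⟩, hpΓ⟩, rfl⟩ _ ⟨q, ⟨⟨-, hqW⟩, hqΓ⟩, rfl⟩ hne
  rw [← dist_mul_inv_one_of_right_invariant hinvG]
  refine hsep _ ⟨p * q⁻¹, ⟨Γ.mul_mem hpΓ (Γ.inv_mem hqΓ), trivial, ?_⟩, rfl⟩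
    (mul_inv_eq_one.not.2 hne)
  exact Set.mul_mem_mul (subset_closure hpW) (Set.inv_mem_inv.2 (subset_closure hqW))

/-- Let `(G, H, Γ)` be a cut-and-project scheme, where `G` and `H` each carry a
right-invariant, proper metric compatible with the topology (on `G × H` the product metric is the
maximum of the component metrics, as in Mathlib's `Prod` instance), and let `W ⊆ H` be relatively
compact.  Then `Λ := π_G((G × W) ∩ Γ)` is uniformly discrete in `G`. -/
theorem cut_and_project_uniformly_discrete
    {G H : Type*}
    [Group G] [MetricSpace G] [IsTopologicalGroup G] [ProperSpace G] [SecondCountableTopology G]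
    [Group H] [MetricSpace H] [IsTopologicalGroup H] [ProperSpace H] [SecondCountableTopology H]
    (hinvG : ∀ x y g : G, dist (x * g) (y * g) = dist x y)
    (hinvH : ∀ x y g : H, dist (x * g) (y * g) = dist x y)
    (Γ : Subgroup (G × H)) [DiscreteTopology Γ]
    (hcocompact : ∃ C : Set (G × H), IsCompact C ∧ C * (Γ : Set (G × H)) = Set.univ)
    (hinj : Set.InjOn Prod.fst (Γ : Set (G × H)))
    (hdense : Dense (Prod.snd '' (Γ : Set (G × H))))
    (W : Set H) (hWrc : IsCompact (closure W)) :
    ∃ r : ℝ, 0 < r ∧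
      ∀ l ∈ Prod.fst '' ((Set.univ ×ˢ W) ∩ (Γ : Set (G × H))),
      ∀ m ∈ Prod.fst '' ((Set.univ ×ˢ W) ∩ (Γ : Set (G × H))),
        l ≠ m → r ≤ dist l m :=
  cut_and_project_uniformly_discrete_general hinvG Γ W hWrc
end

section
/- Let G and H be lcsc groups, each with a right-invariant, proper metric compatible with its topology, let μ_G be a right-invariant Haar measure on G, let Γ ⊆ G × H be a uniform lattice, and let A ⊆ H be a nonempty bounded set. Then there exist constants k₂ > 0 and C > 0 such that for all r > 0 the number of lattice points satisfies |(B_r^G(e) × A) ∩ Γ| ≤ C · μ_G(B_{r+k₂}^G(e)). -/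
/-!
Discreteness of `Γ` and right-invariance of the metric give a uniform `ε > 0` such that distinct
points of `Γ` are at distance at least `ε`. Cover `A` by finitely many balls of radius `ε/2`.
Over each such ball the points of `(B_r × A) ∩ Γ` have `ε`-separated `G`-coordinates, so the
disjoint `ε/2`-balls around these coordinates fit into `B_{r+ε/2}`, which bounds their number by
`μ(B_{r+ε/2}) / μ(B_{ε/2})`.
-/

open MeasureTheory Metric Set Pointwise
open scoped ENNReal

section RightInvariantMetric

variable {G : Type*} [Group G] [PseudoMetricSpace G] [IsIsometricSMul Gᵐᵒᵖ G]

theorem Subgroup.exists_pos_pairwise_le_dist (Γ : Subgroup G) [DiscreteTopology Γ] :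
    ∃ ε > 0, (Γ : Set G).Pairwise fun x y => ε ≤ dist x y := by
  obtain ⟨ε, hε, hball⟩ := exists_ball_inter_eq_singleton_of_mem_discrete
    (SetLike.isDiscrete_iff_discreteTopology.mpr ‹_›) Γ.one_mem
  refine ⟨ε, hε, fun x hx y hy hxy => ?_⟩
  have hquot : x / y ∉ ball (1 : G) ε := fun h =>
    hxy (div_eq_one.mp (hball.subset ⟨h, Γ.div_mem hx hy⟩))
  rwa [mem_ball, not_lt, ← div_self' y, dist_div_right] at hquot

variable [MeasurableSpace G] [MeasurableMul G] (μ : Measure G) [μ.IsMulRightInvariant]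

theorem measure_ball_eq_measure_ball_one (x : G) (ρ : ℝ) :
    μ (ball x ρ) = μ (ball 1 ρ) := by
  simpa using measure_preimage_mul_right μ x⁻¹ (ball 1 ρ)

theorem ncard_mul_measure_ball_le_of_pairwise_le_dist [OpensMeasurableSpace G] {ε r : ℝ}
    {S : Set G} (hS : S ⊆ ball 1 r) (hsep : S.Pairwise fun x y => ε ≤ dist x y) :
    S.ncard * μ (ball 1 (ε / 2)) ≤ μ (ball 1 (r + ε / 2)) := by
  rcases S.finite_or_infinite with hfin | hinf
  · obtain ⟨T, rfl⟩ := hfin.exists_finset_coe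
    have hdisj : (T : Set G).PairwiseDisjoint fun x => ball x (ε / 2) :=
      hsep.mono' fun x y h => ball_disjoint_ball (by linarith)
    calc (T : Set G).ncard * μ (ball 1 (ε / 2))
        = ∑ x ∈ T, μ (ball x (ε / 2)) := by
          simp [measure_ball_eq_measure_ball_one]
      _ = μ (⋃ x ∈ T, ball x (ε / 2)) :=
          (measure_biUnion_finset hdisj fun _ _ => measurableSet_ball).symm
      _ ≤ μ (ball 1 (r + ε / 2)) :=
          measure_mono <| iUnion₂_subset fun x hx =>
            ball_subset_ball' (by linarith [mem_ball.mp (hS hx)])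
  · simp [hinf.ncard]

variable {H : Type*} [PseudoMetricSpace H] [OpensMeasurableSpace G]

theorem ncard_mul_measure_ball_le_of_subset_prod_ball {ε r : ℝ} (hε : 0 < ε) {a : H}
    {S : Set (G × H)} (hS : S ⊆ ball 1 r ×ˢ ball a (ε / 2))
    (hsep : S.Pairwise fun x y => ε ≤ dist x y) :
    S.ncard * μ (ball 1 (ε / 2)) ≤ μ (ball 1 (r + ε / 2)) := by
  have hfst : S.Pairwise fun x y => ε ≤ dist x.1 y.1 := by
    intro x hx y hy hxy
    have hsnd : dist x.2 y.2 < ε := by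
      linarith [dist_triangle_right x.2 y.2 a, mem_ball.mp (hS hx).2, mem_ball.mp (hS hy).2]
    have hdist : ε ≤ max (dist x.1 y.1) (dist x.2 y.2) :=
      Prod.dist_eq (x := x) (y := y) ▸ hsep hx hy hxy
    exact (le_max_iff.mp hdist).resolve_right hsnd.not_ge
  have hinj : S.InjOn Prod.fst := fun x hx y hy h => by
    by_contra hxy
    have hdist : ε ≤ dist x.1 y.1 := hfst hx hy hxy
    rw [h, dist_self] at hdist
    linarith
  rw [← hinj.ncard_image]
  exact ncard_mul_measure_ball_le_of_pairwise_le_dist μ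
    (image_subset_iff.mpr fun x hx => (hS hx).1) (hinj.pairwise_image.mpr hfst)

theorem ncard_prod_inter_mul_measure_ball_le {ε r : ℝ} (hε : 0 < ε) {A : Set H} {t : Finset H}
    (hA : A ⊆ ⋃ a ∈ t, ball a (ε / 2)) {Γ : Set (G × H)}
    (hΓ : Γ.Pairwise fun x y => ε ≤ dist x y) :
    ((ball 1 r ×ˢ A) ∩ Γ).ncard * μ (ball 1 (ε / 2)) ≤ t.card * μ (ball 1 (r + ε / 2)) := by
  set S := (ball (1 : G) r ×ˢ A) ∩ Γ
  have hcover : S = ⋃ a ∈ t, S ∩ Prod.snd ⁻¹' ball a (ε / 2) := by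
    rw [← inter_iUnion₂, ← preimage_iUnion₂, eq_comm, inter_eq_left]
    exact fun x hx => hA hx.1.2
  have hncard : S.ncard ≤ ∑ a ∈ t, (S ∩ Prod.snd ⁻¹' ball a (ε / 2)).ncard := by
    conv_lhs => rw [hcover]
    exact t.set_ncard_biUnion_le _
  calc (S.ncard : ℝ≥0∞) * μ (ball 1 (ε / 2))
      ≤ (∑ a ∈ t, (S ∩ Prod.snd ⁻¹' ball a (ε / 2)).ncard : ℕ) * μ (ball 1 (ε / 2)) := by
        gcongr
    _ = ∑ a ∈ t, ((S ∩ Prod.snd ⁻¹' ball a (ε / 2)).ncard : ℝ≥0∞) * μ (ball 1 (ε / 2)) := by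
        push_cast
        rw [Finset.sum_mul]
    _ ≤ ∑ a ∈ t, μ (ball 1 (r + ε / 2)) := Finset.sum_le_sum fun a _ =>
        ncard_mul_measure_ball_le_of_subset_prod_ball μ hε (fun x hx => ⟨hx.1.1.1, hx.2⟩)
          (hΓ.mono fun x hx => hx.1.2)
    _ = t.card * μ (ball 1 (r + ε / 2)) := by simp

end RightInvariantMetric

theorem growth_lemma_upper_general
    {G H : Type*}
    [Group G] [MetricSpace G] [IsTopologicalGroup G] [ProperSpace G]
    [Group H] [MetricSpace H] [ProperSpace H]
    [MeasurableSpace G] [BorelSpace G]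
    (hinvG : ∀ x y g : G, dist (x * g) (y * g) = dist x y)
    (hinvH : ∀ x y g : H, dist (x * g) (y * g) = dist x y)
    (μ : MeasureTheory.Measure G)
    [MeasureTheory.Measure.IsMulRightInvariant μ]
    [MeasureTheory.IsFiniteMeasureOnCompacts μ]
    [MeasureTheory.Measure.IsOpenPosMeasure μ]
    (Γ : Subgroup (G × H)) [DiscreteTopology Γ]
    (A : Set H) (hAbdd : Bornology.IsBounded A) :
    ∃ k₂ : ℝ, 0 < k₂ ∧ ∃ C : ℝ, 0 < C ∧ ∀ r : ℝ, 0 < r →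
      (Nat.card ↥((Metric.ball (1 : G) r ×ˢ A) ∩ (Γ : Set (G × H))) : ℝ)
        ≤ C * (μ (Metric.ball (1 : G) (r + k₂))).toReal := by
  have : IsIsometricSMul Gᵐᵒᵖ G := ⟨fun c => Isometry.of_dist_eq fun x y => hinvG x y c.unop⟩
  have : IsIsometricSMul Hᵐᵒᵖ H := ⟨fun c => Isometry.of_dist_eq fun x y => hinvH x y c.unop⟩
  obtain ⟨ε, hε, hsep⟩ := Γ.exists_pos_pairwise_le_dist
  obtain ⟨t, -, ht, hA⟩ :=
    exists_finite_cover_balls_of_isCompact_closure hAbdd.isCompact_closure (half_pos hε)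
  obtain ⟨t, rfl⟩ := ht.exists_finset_coe
  have hm : 0 < (μ (ball (1 : G) (ε / 2))).toReal := ENNReal.toReal_pos
    (isOpen_ball.measure_ne_zero μ (nonempty_ball.2 (half_pos hε))) measure_ball_lt_top.ne
  refine ⟨ε / 2, half_pos hε, (t.card + 1) / (μ (ball (1 : G) (ε / 2))).toReal, by positivity,
    fun r _ => ?_⟩
  have hcount := ENNReal.toReal_mono (by finiteness)
    (ncard_prod_inter_mul_measure_ball_le μ (r := r) hε hA hsep)
  simp only [ENNReal.toReal_mul, ENNReal.toReal_natCast] at hcount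
  rw [Nat.card_coe_set_eq, div_mul_eq_mul_div, le_div_iff₀ hm]
  exact hcount.trans (by gcongr; linarith)

/-- Growth lemma, upper bound.  Let `G` and `H` be lcsc groups, each with a
right-invariant, proper, compatible metric, `μ` a right-invariant Haar measure on `G`,
`Γ ⊆ G × H` a uniform lattice, and `A ⊆ H` a nonempty bounded set.  Then there exist constants
`k₂ > 0` and `C > 0` such that for all `r > 0`,
`|(B_r^G(e) × A) ∩ Γ| ≤ C · μ(B_{r+k₂}^G(e))`. -/
theorem growth_lemma_upper
    {G H : Type*}
    [Group G] [MetricSpace G] [IsTopologicalGroup G] [ProperSpace G] [SecondCountableTopology G]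
    [Group H] [MetricSpace H] [IsTopologicalGroup H] [ProperSpace H] [SecondCountableTopology H]
    [MeasurableSpace G] [BorelSpace G]
    (hinvG : ∀ x y g : G, dist (x * g) (y * g) = dist x y)
    (hinvH : ∀ x y g : H, dist (x * g) (y * g) = dist x y)
    (μ : MeasureTheory.Measure G)
    [MeasureTheory.Measure.IsMulRightInvariant μ]
    [MeasureTheory.IsFiniteMeasureOnCompacts μ]
    [MeasureTheory.Measure.IsOpenPosMeasure μ]
    (Γ : Subgroup (G × H)) [DiscreteTopology Γ]
    (hcocompact : ∃ C : Set (G × H), IsCompact C ∧ C * (Γ : Set (G × H)) = Set.univ)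
    (A : Set H) (hAne : A.Nonempty) (hAbdd : Bornology.IsBounded A) :
    ∃ k₂ : ℝ, 0 < k₂ ∧ ∃ C : ℝ, 0 < C ∧ ∀ r : ℝ, 0 < r →
      (Nat.card ↥((Metric.ball (1 : G) r ×ˢ A) ∩ (Γ : Set (G × H))) : ℝ)
        ≤ C * (μ (Metric.ball (1 : G) (r + k₂))).toReal :=
  growth_lemma_upper_general hinvG hinvH μ Γ A hAbdd
end

section
/- Let (G, H, Γ) be a cut-and-project scheme with window W ⊆ H that is nonempty, relatively compact and Γ-regular, and let Λ := π_G((G × W) ∩ Γ) be the associated model set. Let λ ∈ Λ and μ ∈ G. If μλ ∈ Λ, then μ ∈ Γ_G. Moreover, if μ ∈ Γ_G, then the following are equivalent: (a) μλ ∈ Λ; (b) τ(λ) ∈ τ(μ)⁻¹·W̊; (c) τ(μ) ∈ W̊·τ(λ)⁻¹, where W̊ denotes the interior of W. In particular τ(Disp(λ)) ⊆ W̊·W̊⁻¹, where Disp(λ) := {μ ∈ Γ_G : μλ ∈ Λ}. -/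
open Pointwise

/-!
Since `τ γ.1 = γ.2` for `γ ∈ Γ` and `π_H` is a homomorphism, `τ` is multiplicative on `Γ_G`,
and a point `a ∈ Γ_G` lies in the model set exactly when `τ a ∈ W`. Since `τ a ∈ Γ_H` never lies
on `∂W`, this is the same as `τ a ∈ W̊`. The model set lies in the group `Γ_G`, so `μλ ∈ Λ`
forces `μ = (μλ)λ⁻¹ ∈ Γ_G`, and for `μ ∈ Γ_G` the condition `μλ ∈ Λ` becomes
`τ(μ)τ(λ) ∈ W̊`, which is each of (b) and (c) rearranged.
-/

theorem mem_interior_iff_mem_of_notMem_frontier {X : Type*} [TopologicalSpace X] {s : Set X}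
    {x : X} (hx : x ∉ frontier s) : x ∈ interior s ↔ x ∈ s :=
  ⟨fun h => interior_subset h, fun h => (mem_interior_iff_notMem_frontier h).2 hx⟩

theorem Set.mem_mul_singleton_inv_iff {α : Type*} [Group α] {s : Set α} {a b : α} :
    a ∈ s * {b⁻¹} ↔ a * b ∈ s := by
  rw [Set.mul_singleton, Set.image_mul_right, inv_inv, Set.mem_preimage]

namespace CutAndProject

variable {G H : Type*} [Group G] [Group H] {Γ : Subgroup (G × H)}

def modelSet (Γ : Subgroup (G × H)) (W : Set H) : Set G :=
  Prod.fst '' ((Set.univ ×ˢ W) ∩ (Γ : Set (G × H)))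

def IsStarMap (Γ : Subgroup (G × H)) (τ : G → H) : Prop :=
  ∀ p : G × H, p ∈ Γ → τ p.1 = p.2

theorem modelSet_subset_fst_image (W : Set H) :
    modelSet Γ W ⊆ Prod.fst '' (Γ : Set (G × H)) :=
  Set.image_mono Set.inter_subset_right

theorem fst_image_eq_coe_map :
    Prod.fst '' (Γ : Set (G × H)) = Γ.map (MonoidHom.fst G H) := by
  rw [Subgroup.coe_map, MonoidHom.coe_fst]

theorem mul_mem_fst_image {a b : G} (ha : a ∈ Prod.fst '' (Γ : Set (G × H)))
    (hb : b ∈ Prod.fst '' (Γ : Set (G × H))) : a * b ∈ Prod.fst '' (Γ : Set (G × H)) := by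
  rw [fst_image_eq_coe_map] at ha hb ⊢
  exact mul_mem ha hb

theorem inv_mem_fst_image {a : G} (ha : a ∈ Prod.fst '' (Γ : Set (G × H))) :
    a⁻¹ ∈ Prod.fst '' (Γ : Set (G × H)) := by
  rw [fst_image_eq_coe_map] at ha ⊢
  exact inv_mem ha

variable {τ : G → H}

theorem tau_mem_snd_image (hτ : IsStarMap Γ τ) {a : G}
    (ha : a ∈ Prod.fst '' (Γ : Set (G × H))) :
    τ a ∈ Prod.snd '' (Γ : Set (G × H)) := by
  obtain ⟨γ, hγ, rfl⟩ := ha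
  exact ⟨γ, hγ, (hτ γ hγ).symm⟩

theorem tau_mul (hτ : IsStarMap Γ τ) {a b : G} (ha : a ∈ Prod.fst '' (Γ : Set (G × H)))
    (hb : b ∈ Prod.fst '' (Γ : Set (G × H))) : τ (a * b) = τ a * τ b := by
  obtain ⟨γ, hγ, rfl⟩ := ha
  obtain ⟨δ, hδ, rfl⟩ := hb
  rw [hτ γ hγ, hτ δ hδ]
  exact hτ (γ * δ) (mul_mem hγ hδ)

theorem mem_modelSet_iff (hτ : IsStarMap Γ τ) {W : Set H} {a : G}
    (ha : a ∈ Prod.fst '' (Γ : Set (G × H))) :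
    a ∈ modelSet Γ W ↔ τ a ∈ W := by
  constructor
  · rintro ⟨γ, ⟨⟨-, hγW⟩, hγ⟩, rfl⟩
    rwa [hτ γ hγ]
  · obtain ⟨γ, hγ, rfl⟩ := ha
    intro hW
    exact ⟨γ, ⟨⟨trivial, hτ γ hγ ▸ hW⟩, hγ⟩, rfl⟩

theorem mem_modelSet_iff_mem_interior [TopologicalSpace H] (hτ : IsStarMap Γ τ) {W : Set H}
    (hW : frontier W ∩ Prod.snd '' (Γ : Set (G × H)) = ∅) {a : G}
    (ha : a ∈ Prod.fst '' (Γ : Set (G × H))) : a ∈ modelSet Γ W ↔ τ a ∈ interior W := by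
  have hfr : τ a ∉ frontier W := fun h =>
    (Set.eq_empty_iff_forall_notMem.1 hW) (τ a) ⟨h, tau_mem_snd_image hτ ha⟩
  rw [mem_modelSet_iff hτ ha, mem_interior_iff_mem_of_notMem_frontier hfr]

theorem mul_mem_modelSet_iff [TopologicalSpace H] (hτ : IsStarMap Γ τ) {W : Set H}
    (hW : frontier W ∩ Prod.snd '' (Γ : Set (G × H)) = ∅) {a b : G}
    (ha : a ∈ Prod.fst '' (Γ : Set (G × H))) (hb : b ∈ Prod.fst '' (Γ : Set (G × H))) :
    a * b ∈ modelSet Γ W ↔ τ a * τ b ∈ interior W := by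
  rw [mem_modelSet_iff_mem_interior hτ hW (mul_mem_fst_image ha hb),
    tau_mul hτ ha hb]

end CutAndProject

open CutAndProject

theorem window_shift_lemma_general
    {G H : Type*}
    [Group G]
    [Group H] [TopologicalSpace H]
    (Γ : Subgroup (G × H))
    (τ : G → H) (hτ : ∀ p : G × H, p ∈ Γ → τ p.1 = p.2)
    (W : Set H)
    (hWreg : frontier W ∩ (Prod.snd '' (Γ : Set (G × H))) = ∅)
    (Λ : Set G) (hΛ : Λ = Prod.fst '' ((Set.univ ×ˢ W) ∩ (Γ : Set (G × H))))
    (l : G) (hl : l ∈ Λ) (m : G) :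
    (m * l ∈ Λ → m ∈ Prod.fst '' (Γ : Set (G × H))) ∧
    (m ∈ Prod.fst '' (Γ : Set (G × H)) →
      ((m * l ∈ Λ ↔ τ l ∈ (τ m)⁻¹ • interior W) ∧
       (m * l ∈ Λ ↔ τ m ∈ interior W * ({(τ l)⁻¹} : Set H)))) ∧
    (τ '' {m' : G | m' ∈ Prod.fst '' (Γ : Set (G × H)) ∧ m' * l ∈ Λ}
      ⊆ interior W * (interior W)⁻¹) := by
  change Λ = modelSet Γ W at hΛ
  subst hΛ
  have hlΓ := modelSet_subset_fst_image W hl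
  have hτl : τ l ∈ interior W := (mem_modelSet_iff_mem_interior hτ hWreg hlΓ).1 hl
  refine ⟨fun hml => ?_, fun hm => ⟨?_, ?_⟩, ?_⟩
  · simpa only [mul_inv_cancel_right] using mul_mem_fst_image (modelSet_subset_fst_image W hml) (inv_mem_fst_image hlΓ)
  · rw [mul_mem_modelSet_iff hτ hWreg hm hlΓ, Set.mem_inv_smul_set_iff, smul_eq_mul]
  · rw [mul_mem_modelSet_iff hτ hWreg hm hlΓ, Set.mem_mul_singleton_inv_iff]
  · rintro _ ⟨m', ⟨hm', hm'l⟩, rfl⟩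
    exact ⟨_, (mul_mem_modelSet_iff hτ hWreg hm' hlΓ).1 hm'l, _, Set.inv_mem_inv.2 hτl,
      mul_inv_cancel_right _ _⟩

/-- Let `(G, H, Γ)` be a cut-and-project scheme with a nonempty, relatively
compact, `Γ`-regular window `W ⊆ H` and model set `Λ := π_G((G × W) ∩ Γ)`.  The map
`τ = π_H ∘ (π_G|_Γ)⁻¹` is encoded by a function `τ : G → H` satisfying `τ γ.1 = γ.2` for all
`γ ∈ Γ` (which determines it on `Γ_G` since `π_G|_Γ` is injective).  Then for `l ∈ Λ` and
`m ∈ G`: if `m·l ∈ Λ` then `m ∈ Γ_G`; and if `m ∈ Γ_G`, then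
`m·l ∈ Λ ↔ τ(l) ∈ τ(m)⁻¹·W̊ ↔ τ(m) ∈ W̊·τ(l)⁻¹`.  In particular
`τ(Disp(l)) ⊆ W̊·W̊⁻¹` where `Disp(l) = {m ∈ Γ_G : m·l ∈ Λ}`. -/
theorem window_shift_lemma
    {G H : Type*}
    [Group G] [TopologicalSpace G] [IsTopologicalGroup G]
    [LocallyCompactSpace G] [SecondCountableTopology G]
    [Group H] [TopologicalSpace H] [IsTopologicalGroup H]
    [LocallyCompactSpace H] [SecondCountableTopology H]
    (Γ : Subgroup (G × H)) [DiscreteTopology Γ]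
    (hcocompact : ∃ C : Set (G × H), IsCompact C ∧ C * (Γ : Set (G × H)) = Set.univ)
    (hinj : Set.InjOn Prod.fst (Γ : Set (G × H)))
    (hdense : Dense (Prod.snd '' (Γ : Set (G × H))))
    (τ : G → H) (hτ : ∀ p : G × H, p ∈ Γ → τ p.1 = p.2)
    (W : Set H) (hWne : W.Nonempty) (hWrc : IsCompact (closure W))
    (hWreg : frontier W ∩ (Prod.snd '' (Γ : Set (G × H))) = ∅)
    (Λ : Set G) (hΛ : Λ = Prod.fst '' ((Set.univ ×ˢ W) ∩ (Γ : Set (G × H))))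
    (l : G) (hl : l ∈ Λ) (m : G) :
    (m * l ∈ Λ → m ∈ Prod.fst '' (Γ : Set (G × H))) ∧
    (m ∈ Prod.fst '' (Γ : Set (G × H)) →
      ((m * l ∈ Λ ↔ τ l ∈ (τ m)⁻¹ • interior W) ∧
       (m * l ∈ Λ ↔ τ m ∈ interior W * ({(τ l)⁻¹} : Set H)))) ∧
    (τ '' {m' : G | m' ∈ Prod.fst '' (Γ : Set (G × H)) ∧ m' * l ∈ Λ}
      ⊆ interior W * (interior W)⁻¹) :=
  window_shift_lemma_general Γ τ hτ W hWreg Λ hΛ l hl m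
end

section
/- Let (G, H, Γ) be a cut-and-project scheme, with G and H each carrying a right-invariant, proper metric compatible with the topology, and let W ⊆ H be a nonempty, relatively compact, Γ-regular window with model set Λ := π_G((G × W) ∩ Γ). Then for all λ, μ ∈ Λ and r > 0: λ ∼_r μ if and only if S_r(λ) = S_r(μ). -/
open Pointwise

variable {G H : Type*}

/-- The cut-and-project set `Λ = π_G((G × W) ∩ Γ)`. -/
def modelSet [Group G] [Group H] (Γ : Subgroup (G × H)) (W : Set H) : Set G :=
  Prod.fst '' ((Set.univ ×ˢ W) ∩ (Γ : Set (G × H)))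

/-- The displacements of `l`: `Disp(l) = {m ∈ Γ_G : m·l ∈ Λ}`. -/
def disp [Group G] [Group H] (Γ : Subgroup (G × H)) (W : Set H) (l : G) : Set G :=
  {m : G | m ∈ Prod.fst '' (Γ : Set (G × H)) ∧ m * l ∈ modelSet Γ W}

/-- The `r`-slab of `l`:
`S_r(l) = π_H({(γ, μ) ∈ Γ : |γ| < r, μ ∈ WW⁻¹, γ⁻¹ ∈ Disp(l)})`. -/
def slabOf [Group G] [Group H] [MetricSpace G] (Γ : Subgroup (G × H)) (W : Set H)
    (r : ℝ) (l : G) : Set H :=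
  Prod.snd '' {p : G × H | p ∈ (Γ : Set (G × H)) ∧ dist p.1 1 < r ∧
    p.2 ∈ W * W⁻¹ ∧ p.1⁻¹ ∈ disp Γ W l}

/-- `l ∼_r m` iff the `r`-patches agree: `P_r(l)·l⁻¹ = P_r(m)·m⁻¹`,
where `P_r(x) = B_r(x) ∩ Λ`. -/
def patchEquiv [Group G] [MetricSpace G] (Λ : Set G) (r : ℝ) (l m : G) : Prop :=
  (Metric.ball l r ∩ Λ) * ({l⁻¹} : Set G) = (Metric.ball m r ∩ Λ) * ({m⁻¹} : Set G)

/-!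
Lift `l, m ∈ Λ` to `l̂, m̂ ∈ Γ` with `π_H l̂, π_H m̂ ∈ W`, and let `Γ_r = {γ ∈ Γ : |π_G γ| < r}`.
For `γ ∈ Γ`, injectivity of `π_G` on `Γ` makes `π_G γ · l ∈ Λ` equivalent to `π_H γ · π_H l̂ ∈ W`.
By right invariance the recentred patch `P_r(l) l⁻¹` is therefore
`π_G {γ ∈ Γ_r : π_H γ · π_H l̂ ∈ W}`, while the slab `S_r(l)` is
`π_H {γ ∈ Γ_r : (π_H γ)⁻¹ · π_H l̂ ∈ W}`. As `π_G` is injective on `Γ` and `Γ_r` is closed under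
inversion, both `l ∼_r m` and `S_r(l) = S_r(m)` say that `π_H γ · π_H l̂ ∈ W ↔ π_H γ · π_H m̂ ∈ W`
for every `γ ∈ Γ_r`.
-/

def latticeBall [Group G] [Group H] [MetricSpace G] (Γ : Subgroup (G × H)) (r : ℝ) :
    Set (G × H) :=
  {γ | γ ∈ Γ ∧ dist γ.1 1 < r}

section RightInvariant

variable [Group G] [MetricSpace G]

lemma dist_inv_one_of_rightInvariant (hinvG : ∀ x y g : G, dist (x * g) (y * g) = dist x y)
    (x : G) : dist x⁻¹ 1 = dist x 1 := by
  rw [← hinvG x⁻¹ 1 x, inv_mul_cancel, one_mul, dist_comm]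

lemma ball_inter_mul_singleton_inv (hinvG : ∀ x y g : G, dist (x * g) (y * g) = dist x y)
    (Λ : Set G) (r : ℝ) (l : G) :
    (Metric.ball l r ∩ Λ) * {l⁻¹} = {x | dist x 1 < r ∧ x * l ∈ Λ} := by
  ext x
  simp only [Set.mul_singleton, Set.image_mul_right, inv_inv, Set.mem_preimage,
    Set.mem_inter_iff, Metric.mem_ball, Set.mem_ofPred_eq]
  rw [← hinvG x 1 l, one_mul]

lemma inv_mem_latticeBall_iff [Group H] (hinvG : ∀ x y g : G, dist (x * g) (y * g) = dist x y)
    {Γ : Subgroup (G × H)} {r : ℝ} {γ : G × H} :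
    γ⁻¹ ∈ latticeBall Γ r ↔ γ ∈ latticeBall Γ r := by
  simp only [latticeBall, Set.mem_ofPred_eq, inv_mem_iff, Prod.fst_inv,
    dist_inv_one_of_rightInvariant hinvG]

end RightInvariant

section ModelSet

variable [Group G] [Group H] {Γ : Subgroup (G × H)} {W : Set H}

lemma mul_fst_mem_modelSet_iff {p : G × H} (hp : p ∈ Γ) (x : G) :
    x * p.1 ∈ modelSet Γ W ↔ ∃ γ ∈ Γ, γ.1 = x ∧ γ.2 * p.2 ∈ W := by
  constructor
  · rintro ⟨q, ⟨⟨-, hqW⟩, hq⟩, hqx⟩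
    exact ⟨q * p⁻¹, mul_mem hq (inv_mem hp), by simp [hqx], by simpa using hqW⟩
  · rintro ⟨γ, hγ, rfl, hγW⟩
    exact ⟨γ * p, ⟨⟨trivial, hγW⟩, mul_mem hγ hp⟩, rfl⟩

lemma fst_mul_fst_mem_modelSet_iff (hinj : Set.InjOn Prod.fst (Γ : Set (G × H)))
    {γ p : G × H} (hγ : γ ∈ Γ) (hp : p ∈ Γ) :
    γ.1 * p.1 ∈ modelSet Γ W ↔ γ.2 * p.2 ∈ W := by
  rw [mul_fst_mem_modelSet_iff hp]
  exact ⟨fun ⟨δ, hδ, hδγ, hδW⟩ => hinj hδ hγ hδγ ▸ hδW, fun h => ⟨γ, hγ, rfl, h⟩⟩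

variable [MetricSpace G]

lemma ball_inter_modelSet_mul_singleton_inv
    (hinvG : ∀ x y g : G, dist (x * g) (y * g) = dist x y) {p : G × H} (hp : p ∈ Γ) (r : ℝ) :
    (Metric.ball p.1 r ∩ modelSet Γ W) * {p.1⁻¹} =
      Prod.fst '' (latticeBall Γ r ∩ Prod.snd ⁻¹' ((· * p.2) ⁻¹' W)) := by
  rw [ball_inter_mul_singleton_inv hinvG]
  ext x
  simp only [Set.mem_ofPred_eq, mul_fst_mem_modelSet_iff hp]
  constructor
  · rintro ⟨hx, γ, hγ, rfl, hγW⟩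
    exact ⟨γ, ⟨⟨hγ, hx⟩, hγW⟩, rfl⟩
  · rintro ⟨γ, ⟨⟨hγ, hx⟩, hγW⟩, rfl⟩
    exact ⟨hx, γ, hγ, rfl, hγW⟩

lemma slabOf_fst_eq (hinj : Set.InjOn Prod.fst (Γ : Set (G × H)))
    {p : G × H} (hp : p ∈ Γ) (hpW : p.2 ∈ W) (r : ℝ) :
    slabOf Γ W r p.1 = Prod.snd '' (latticeBall Γ r ∩ Prod.snd ⁻¹' ((·⁻¹ * p.2) ⁻¹' W)) := by
  ext h
  constructor
  · rintro ⟨γ, ⟨hγ, hγr, -, -, hγΛ⟩, rfl⟩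
    exact ⟨γ, ⟨⟨hγ, hγr⟩, (fst_mul_fst_mem_modelSet_iff hinj (inv_mem hγ) hp).1 hγΛ⟩, rfl⟩
  · rintro ⟨γ, ⟨⟨hγ, hγr⟩, hγW⟩, rfl⟩
    refine ⟨γ, ⟨hγ, hγr, ?_, ⟨γ⁻¹, inv_mem hγ, rfl⟩,
      (fst_mul_fst_mem_modelSet_iff hinj (inv_mem hγ) hp).2 hγW⟩, rfl⟩
    rw [show γ.2 = p.2 * (γ.2⁻¹ * p.2)⁻¹ by group]
    exact Set.mul_mem_mul hpW (Set.inv_mem_inv.2 hγW)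

lemma patchEquiv_modelSet_iff (hinvG : ∀ x y g : G, dist (x * g) (y * g) = dist x y)
    (hinj : Set.InjOn Prod.fst (Γ : Set (G × H))) {p q : G × H} (hp : p ∈ Γ) (hq : q ∈ Γ)
    (r : ℝ) :
    patchEquiv (modelSet Γ W) r p.1 q.1 ↔
      ∀ γ ∈ latticeBall Γ r, (γ.2 * p.2 ∈ W ↔ γ.2 * q.2 ∈ W) := by
  rw [patchEquiv, ball_inter_modelSet_mul_singleton_inv hinvG hp,
    ball_inter_modelSet_mul_singleton_inv hinvG hq,
    (hinj.mono fun γ hγ => hγ.1).image_eq_image_iff Set.inter_subset_left Set.inter_subset_left]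
  simp only [Set.ext_iff, Set.mem_inter_iff, and_congr_right_iff, Set.mem_preimage]

lemma slabOf_eq_slabOf_iff (hinvG : ∀ x y g : G, dist (x * g) (y * g) = dist x y)
    (hinj : Set.InjOn Prod.fst (Γ : Set (G × H))) {p q : G × H} (hp : p ∈ Γ) (hpW : p.2 ∈ W)
    (hq : q ∈ Γ) (hqW : q.2 ∈ W) (r : ℝ) :
    slabOf Γ W r p.1 = slabOf Γ W r q.1 ↔
      ∀ γ ∈ latticeBall Γ r, (γ.2 * p.2 ∈ W ↔ γ.2 * q.2 ∈ W) := by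
  rw [slabOf_fst_eq hinj hp hpW, slabOf_fst_eq hinj hq hqW, Set.image_inter_preimage,
    Set.image_inter_preimage]
  simp only [Set.ext_iff, Set.mem_inter_iff, and_congr_right_iff, Set.forall_mem_image,
    Set.mem_preimage]
  constructor
  · intro h γ hγ
    simpa using h ((inv_mem_latticeBall_iff hinvG).2 hγ)
  · intro h γ hγ
    simpa using h γ⁻¹ ((inv_mem_latticeBall_iff hinvG).2 hγ)

end ModelSet

theorem patchEquiv_iff_slab_eq_general
    [Group G] [MetricSpace G] [Group H]
    (hinvG : ∀ x y g : G, dist (x * g) (y * g) = dist x y)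
    (Γ : Subgroup (G × H))
    (hinj : Set.InjOn Prod.fst (Γ : Set (G × H)))
    (W : Set H)
    (r : ℝ)
    (l : G) (hl : l ∈ modelSet Γ W) (m : G) (hm : m ∈ modelSet Γ W) :
    patchEquiv (modelSet Γ W) r l m ↔ slabOf Γ W r l = slabOf Γ W r m := by
  obtain ⟨p, ⟨⟨-, hpW⟩, hp⟩, rfl⟩ := hl
  obtain ⟨q, ⟨⟨-, hqW⟩, hq⟩, rfl⟩ := hm
  rw [patchEquiv_modelSet_iff hinvG hinj hp hq, slabOf_eq_slabOf_iff hinvG hinj hp hpW hq hqW]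

/-- For a cut-and-project scheme `(G, H, Γ)` with nonempty, relatively compact,
`Γ`-regular window `W` and model set `Λ`: for all `l, m ∈ Λ` and `r > 0`,
`l ∼_r m` if and only if `S_r(l) = S_r(m)`. -/
theorem patchEquiv_iff_slab_eq
    [Group G] [MetricSpace G] [IsTopologicalGroup G] [ProperSpace G] [SecondCountableTopology G]
    [Group H] [MetricSpace H] [IsTopologicalGroup H] [ProperSpace H] [SecondCountableTopology H]
    (hinvG : ∀ x y g : G, dist (x * g) (y * g) = dist x y)
    (hinvH : ∀ x y g : H, dist (x * g) (y * g) = dist x y)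
    (Γ : Subgroup (G × H)) [DiscreteTopology Γ]
    (hcocompact : ∃ C : Set (G × H), IsCompact C ∧ C * (Γ : Set (G × H)) = Set.univ)
    (hinj : Set.InjOn Prod.fst (Γ : Set (G × H)))
    (hdense : Dense (Prod.snd '' (Γ : Set (G × H))))
    (W : Set H) (hWne : W.Nonempty) (hWrc : IsCompact (closure W))
    (hWreg : frontier W ∩ (Prod.snd '' (Γ : Set (G × H))) = ∅)
    (r : ℝ) (hr : 0 < r)
    (l : G) (hl : l ∈ modelSet Γ W) (m : G) (hm : m ∈ modelSet Γ W) :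
    patchEquiv (modelSet Γ W) r l m ↔ slabOf Γ W r l = slabOf Γ W r m :=
  patchEquiv_iff_slab_eq_general hinvG Γ hinj W r l hl m hm
end

section
/- Let L be a set of n distinct affine lines in ℝ². Then: (a) for every integer k with 2 ≤ k ≤ n, t(L, k) ≤ n(n−1)/(k(k−1)); (b) for every integer k with √(2n) < k ≤ n, t(L, k) < 2n/k. -/
/-- An affine line in `ℝ²`: a level set of a nonzero linear functional. -/
def IsAffineLine (l : Set (EuclideanSpace ℝ (Fin 2))) : Prop :=
  ∃ (φ : EuclideanSpace ℝ (Fin 2) →ₗ[ℝ] ℝ) (c : ℝ), φ ≠ 0 ∧ l = {x | φ x = c}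

/-- The number of lines of `L` passing through the point `p`. -/
noncomputable def linesThrough (L : Finset (Set (EuclideanSpace ℝ (Fin 2))))
    (p : EuclideanSpace ℝ (Fin 2)) : ℕ :=
  Nat.card ↥{l : Set (EuclideanSpace ℝ (Fin 2)) | l ∈ L ∧ p ∈ l}

/-- `t(L, k)`: the number of points lying on at least `k` distinct lines of `L`. -/
noncomputable def tcount (L : Finset (Set (EuclideanSpace ℝ (Fin 2)))) (k : ℕ) : ℕ :=
  Nat.card ↥{p : EuclideanSpace ℝ (Fin 2) | k ≤ linesThrough L p}

/-!
Two distinct points lie on at most one common line. Hence the pairs of lines meeting at distinct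
`k`-rich points are distinct, so `t · C(k, 2) ≤ C(n, 2)`. For (b), if `t ≥ 2n/k`, pick
`s = min(t, k)` rich points: by inclusion–exclusion the lines through them number at least
`s·k − C(s, 2) > n`.
-/

open Finset Module

lemma Set.natCard_prop_of_forall_finset_subset {α : Type*} {s : Set α} {Q : ℕ → Prop}
    (h : ∀ P : Finset α, ↑P ⊆ s → Q #P) : Q (Nat.card s) := by
  rcases s.finite_or_infinite with hs | hs
  · rw [Nat.card_eq_card_finite_toFinset hs]
    exact h _ hs.coe_toFinset.subset
  · -- an infinite set has `Nat.card` zero, the cardinality of `∅`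
    have := hs.to_subtype
    rw [Nat.card_eq_zero_of_infinite]
    exact h ∅ (by simp)

lemma ker_eq_span_singleton_of_finrank_eq_two {K V : Type*} [Field K] [AddCommGroup V]
    [Module K V] [FiniteDimensional K V] (hV : finrank K V = 2) {φ : Dual K V} (hφ : φ ≠ 0)
    {v : V} (hv : v ≠ 0) (hφv : φ v = 0) : LinearMap.ker φ = K ∙ v := by
  have hker := Dual.finrank_ker_add_one_of_ne_zero hφ
  exact eq_span_singleton_of_mem_of_finrank_eq_one (by omega) hφv hv

section PartialLinearSpace

variable {α : Type*}

open Classical in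
noncomputable def pencil (L : Finset (Set α)) (p : α) : Finset (Set α) := {l ∈ L | p ∈ l}

@[simp]
lemma mem_pencil {L : Finset (Set α)} {p : α} {l : Set α} : l ∈ pencil L p ↔ l ∈ L ∧ p ∈ l := by
  classical exact mem_filter

lemma pencil_subset (L : Finset (Set α)) (p : α) : pencil L p ⊆ L := fun _ h => (mem_pencil.1 h).1

lemma card_mul_choose_two_le {L : Finset (Set α)}
    (hL : ∀ ⦃p q⦄, p ≠ q → #(pencil L p ∩ pencil L q) ≤ 1) {P : Finset α} {k : ℕ}
    (hP : ∀ p ∈ P, k ≤ #(pencil L p)) : #P * k.choose 2 ≤ (#L).choose 2 := by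
  classical
  have hdisj : (P : Set α).PairwiseDisjoint fun p => (pencil L p).powersetCard 2 := by
    intro x _ y _ hxy
    refine disjoint_left.2 fun s hsx hsy => ?_
    rw [mem_powersetCard] at hsx hsy
    obtain ⟨a, ha, b, hb, hab⟩ := one_lt_card.1 (by omega : 1 < #s)
    exact hab (card_le_one.1 (hL hxy) a (mem_inter.2 ⟨hsx.1 ha, hsy.1 ha⟩)
      b (mem_inter.2 ⟨hsx.1 hb, hsy.1 hb⟩))
  calc #P * k.choose 2 = ∑ _p ∈ P, k.choose 2 := by rw [sum_const, smul_eq_mul]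
    _ ≤ ∑ p ∈ P, #((pencil L p).powersetCard 2) := sum_le_sum fun p hp => by
        rw [card_powersetCard]; exact Nat.choose_le_choose 2 (hP p hp)
    _ = #(P.biUnion fun p => (pencil L p).powersetCard 2) := (card_biUnion hdisj).symm
    _ ≤ #(L.powersetCard 2) :=
        card_le_card (biUnion_subset.2 fun p _ => powersetCard_mono (pencil_subset L p))
    _ = (#L).choose 2 := card_powersetCard 2 L

lemma card_mul_le_card_biUnion_add_choose_two [DecidableEq (Set α)] {L : Finset (Set α)}
    (hL : ∀ ⦃p q⦄, p ≠ q → #(pencil L p ∩ pencil L q) ≤ 1) {Q : Finset α} {k : ℕ}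
    (hQ : ∀ p ∈ Q, k ≤ #(pencil L p)) : #Q * k ≤ #(Q.biUnion (pencil L)) + (#Q).choose 2 := by
  classical
  induction Q using Finset.induction_on with
  | empty => simp
  | insert a Q ha ih =>
    have hQk := ih fun p hp => hQ p (mem_insert_of_mem hp)
    have hak := hQ a (mem_insert_self a Q)
    have hcap : #(pencil L a ∩ Q.biUnion (pencil L)) ≤ #Q := by
      rw [inter_biUnion]
      calc _ ≤ ∑ q ∈ Q, #(pencil L a ∩ pencil L q) := card_biUnion_le
        _ ≤ ∑ _q ∈ Q, 1 := sum_le_sum fun q hq => hL (ne_of_mem_of_not_mem hq ha).symm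
        _ = #Q := by simp
    have hunion := card_union_add_card_inter (pencil L a) (Q.biUnion (pencil L))
    have hchoose : (#Q + 1).choose 2 = (#Q).choose 2 + #Q := by
      rw [Nat.choose_succ_succ', Nat.choose_one_right, add_comm]
    rw [biUnion_insert, card_insert_of_notMem ha, hchoose, add_one_mul]
    omega

lemma card_mul_lt_of_lt_mul_self {L : Finset (Set α)}
    (hL : ∀ ⦃p q⦄, p ≠ q → #(pencil L p ∩ pencil L q) ≤ 1) {P : Finset α} {k : ℕ}
    (hk : 2 * #L < k * k) (hkL : k ≤ #L) (hP : ∀ p ∈ P, k ≤ #(pencil L p)) :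
    #P * k < 2 * #L := by
  classical
  by_contra! hPk
  obtain ⟨Q, hQP, hQ⟩ := exists_subset_card_eq (min_le_left #P k)
  have hunion := card_mul_le_card_biUnion_add_choose_two hL fun p hp => hP p (hQP hp)
  have hU : #(Q.biUnion (pencil L)) ≤ #L :=
    card_le_card (biUnion_subset.2 fun p _ => pencil_subset L p)
  have hchoose : 2 * (#Q).choose 2 = #Q * (#Q - 1) := by
    rw [Nat.choose_two_right, Nat.mul_div_cancel' (Nat.even_mul_pred_self _).two_dvd]
  have hQk : 2 * #L ≤ #Q * k := by
    rcases le_total #P k with h | h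
    · rwa [hQ, min_eq_left h]
    · rw [hQ, min_eq_right h]; exact hk.le
  have hQ_le : #Q ≤ k := hQ ▸ min_le_right _ _
  obtain ⟨m, hm⟩ : ∃ m, #Q = m + 1 := Nat.exists_eq_succ_of_ne_zero (by rintro h0; nlinarith)
  rw [hm, Nat.add_sub_cancel] at hchoose
  rw [hm] at hunion hQ_le
  nlinarith

end PartialLinearSpace

lemma IsAffineLine.subset_of_mem {l₁ l₂ : Set (EuclideanSpace ℝ (Fin 2))}
    (h₁ : IsAffineLine l₁) (h₂ : IsAffineLine l₂) {p q : EuclideanSpace ℝ (Fin 2)}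
    (hpq : p ≠ q) (hp₁ : p ∈ l₁) (hq₁ : q ∈ l₁) (hp₂ : p ∈ l₂) (hq₂ : q ∈ l₂) :
    l₁ ⊆ l₂ := by
  obtain ⟨φ, c, hφ, rfl⟩ := h₁
  obtain ⟨ψ, d, hψ, rfl⟩ := h₂
  simp only [Set.mem_ofPred_eq] at hp₁ hq₁ hp₂ hq₂
  have hv : q - p ≠ 0 := sub_ne_zero.mpr hpq.symm
  have hdim : finrank ℝ (EuclideanSpace ℝ (Fin 2)) = 2 := finrank_euclideanSpace_fin
  have hker : LinearMap.ker φ = LinearMap.ker ψ := by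
    rw [ker_eq_span_singleton_of_finrank_eq_two hdim hφ hv (by simp [hp₁, hq₁]),
      ker_eq_span_singleton_of_finrank_eq_two hdim hψ hv (by simp [hp₂, hq₂])]
  intro x hx
  have hxp : x - p ∈ LinearMap.ker ψ := by
    rw [← hker, LinearMap.mem_ker, map_sub, hx.out, hp₁, sub_self]
  simpa [hp₂, sub_eq_zero] using hxp

lemma IsAffineLine.eq_of_mem {l₁ l₂ : Set (EuclideanSpace ℝ (Fin 2))}
    (h₁ : IsAffineLine l₁) (h₂ : IsAffineLine l₂) {p q : EuclideanSpace ℝ (Fin 2)}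
    (hpq : p ≠ q) (hp₁ : p ∈ l₁) (hq₁ : q ∈ l₁) (hp₂ : p ∈ l₂) (hq₂ : q ∈ l₂) :
    l₁ = l₂ :=
  (h₁.subset_of_mem h₂ hpq hp₁ hq₁ hp₂ hq₂).antisymm (h₂.subset_of_mem h₁ hpq hp₂ hq₂ hp₁ hq₁)

lemma linesThrough_eq_card_pencil (L : Finset (Set (EuclideanSpace ℝ (Fin 2))))
    (p : EuclideanSpace ℝ (Fin 2)) : linesThrough L p = #(pencil L p) := by
  rw [linesThrough, Nat.card_coe_set_eq, ← Set.ncard_coe_finset]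
  congr
  ext
  simp

lemma tcount_prop_of_forall_finset {L : Finset (Set (EuclideanSpace ℝ (Fin 2)))} {k : ℕ}
    {Q : ℕ → Prop} (h : ∀ P : Finset (EuclideanSpace ℝ (Fin 2)),
      (∀ p ∈ P, k ≤ #(pencil L p)) → Q #P) : Q (tcount L k) :=
  Set.natCard_prop_of_forall_finset_subset fun P hP =>
    h P fun p hp => linesThrough_eq_card_pencil L p ▸ hP hp

lemma card_pencil_inter_pencil_le_one {L : Finset (Set (EuclideanSpace ℝ (Fin 2)))}
    (hL : ∀ l ∈ L, IsAffineLine l) ⦃p q : EuclideanSpace ℝ (Fin 2)⦄ (hpq : p ≠ q) :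
    #(pencil L p ∩ pencil L q) ≤ 1 :=
  card_le_one.2 fun a ha b hb => by
    simp only [mem_inter, mem_pencil] at ha hb
    exact (hL a ha.1.1).eq_of_mem (hL b hb.1.1) hpq ha.1.2 ha.2.2 hb.1.2 hb.2.2

/-- Let `L` be a set of `n` distinct affine lines in `ℝ²`.  Then
(a) `t(L, k) ≤ n(n−1)/(k(k−1))` for all `2 ≤ k ≤ n`, and
(b) `t(L, k) < 2n/k` for all `√(2n) < k ≤ n`. -/
theorem tcount_bounds (L : Finset (Set (EuclideanSpace ℝ (Fin 2))))
    (hL : ∀ l ∈ L, IsAffineLine l) :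
    (∀ k : ℕ, 2 ≤ k → k ≤ L.card →
      (tcount L k : ℝ) ≤ ((L.card : ℝ) * ((L.card : ℝ) - 1)) / ((k : ℝ) * ((k : ℝ) - 1))) ∧
    (∀ k : ℕ, Real.sqrt (2 * L.card) < (k : ℝ) → k ≤ L.card →
      (tcount L k : ℝ) < 2 * (L.card : ℝ) / (k : ℝ)) := by
  have hpencil := card_pencil_inter_pencil_le_one hL
  refine ⟨fun k hk2 _ => ?_, fun k hk hkL => ?_⟩
  · refine tcount_prop_of_forall_finset (Q := fun t : ℕ => (t : ℝ) ≤ _) fun P hP => ?_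
    have hcount : ((#P * k.choose 2 : ℕ) : ℝ) ≤ ((#L).choose 2 : ℕ) := by
      exact_mod_cast card_mul_choose_two_le hpencil hP
    have hk : (0 : ℝ) < k * (k - 1) := by
      have : (2 : ℝ) ≤ k := by exact_mod_cast hk2
      nlinarith
    rw [le_div_iff₀ hk]
    push_cast [Nat.cast_choose_two] at hcount
    linarith
  · have hk0 : (0 : ℝ) < k := (Real.sqrt_nonneg _).trans_lt hk
    have hkk : 2 * #L < k * k := by
      have := (Real.sqrt_lt' hk0).1 hk
      exact_mod_cast (by push_cast; nlinarith : ((2 * #L : ℕ) : ℝ) < (k * k : ℕ))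
    refine tcount_prop_of_forall_finset (Q := fun t : ℕ => (t : ℝ) < _) fun P hP => ?_
    rw [lt_div_iff₀ hk0]
    exact_mod_cast card_mul_lt_of_lt_mul_self hpencil hkk hkL hP
end

section
/- Let 𝔤 be a Lie algebra over ℝ (or over any field of characteristic zero). If 𝔤 is locally two-step nilpotent, i.e. ⁅X, ⁅X, Y⁆⁆ = 0 for all X, Y ∈ 𝔤, then 𝔤 is two-step nilpotent or abelian, i.e. ⁅Z, ⁅Y, X⁆⁆ = 0 for all X, Y, Z ∈ 𝔤. -/
/-!
Polarizing `⁅X, ⁅X, Y⁆⁆ = 0` shows that the trilinear map `(X, Y, Z) ↦ ⁅X, ⁅Y, Z⁆⁆` is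
alternating in its first two arguments; it is alternating in the last two by skew-symmetry of
the bracket, so it is invariant under cyclic permutations. The three terms of the Jacobi
identity are then equal, so `3 • ⁅X, ⁅Y, Z⁆⁆ = 0`, and without `3`-torsion the
bracket vanishes.
-/

def IsLocallyTwoStepNilpotent (L : Type*) [LieRing L] : Prop :=
  ∀ X Y : L, ⁅X, ⁅X, Y⁆⁆ = 0

namespace IsLocallyTwoStepNilpotent

variable {L : Type*} [LieRing L]

theorem lie_lie_swap (h : IsLocallyTwoStepNilpotent L) (X Y Z : L) :
    ⁅X, ⁅Y, Z⁆⁆ = -⁅Y, ⁅X, Z⁆⁆ := by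
  have hXY := h (X + Y) Z
  simp only [add_lie, lie_add, h X Z, h Y Z, zero_add, add_zero] at hXY
  exact eq_neg_of_add_eq_zero_right hXY

theorem lie_lie_cycle (h : IsLocallyTwoStepNilpotent L) (X Y Z : L) :
    ⁅X, ⁅Y, Z⁆⁆ = ⁅Y, ⁅Z, X⁆⁆ := by
  rw [h.lie_lie_swap, ← lie_skew X Z, lie_neg, neg_neg]

theorem three_nsmul_lie_lie (h : IsLocallyTwoStepNilpotent L) (X Y Z : L) :
    3 • ⁅X, ⁅Y, Z⁆⁆ = 0 := by
  have hjacobi := lie_jacobi X Y Z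
  rw [← h.lie_lie_cycle X Y Z, h.lie_lie_cycle Z X Y] at hjacobi
  rw [← hjacobi]
  abel

theorem lie_lie_eq_zero [IsAddTorsionFree L] (h : IsLocallyTwoStepNilpotent L) (X Y Z : L) :
    ⁅X, ⁅Y, Z⁆⁆ = 0 :=
  (smul_eq_zero.mp (h.three_nsmul_lie_lie X Y Z)).resolve_left three_ne_zero

end IsLocallyTwoStepNilpotent

/-- Let `𝔤` be a Lie algebra over `ℝ`.  If `𝔤` is locally two-step
nilpotent, i.e. `⁅X, ⁅X, Y⁆⁆ = 0` for all `X, Y`, then `𝔤` is two-step nilpotent or abelian,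
i.e. `⁅Z, ⁅Y, X⁆⁆ = 0` for all `X, Y, Z`. -/
theorem two_step_nilpotent_of_locally_two_step_nilpotent
    {L : Type*} [LieRing L] [LieAlgebra ℝ L]
    (h : ∀ X Y : L, ⁅X, ⁅X, Y⁆⁆ = 0) :
    ∀ X Y Z : L, ⁅Z, ⁅Y, X⁆⁆ = 0 := by
  have : IsAddTorsionFree L := .of_isTorsionFree ℝ L
  exact fun X Y Z => IsLocallyTwoStepNilpotent.lie_lie_eq_zero h Z Y X
end
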